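/- For every natural number n, the sum over all partitions P of a set with n+1 elements of (|P|-1)! is at most n! · e^{n+2}, where |P| denotes the number of blocks of P and e is Euler's number. -/

import Mathlib

/-!
Fix a point `x₀`. A partition `P` with `k` blocks, together with an injective labelling of its
`k - 1` blocks not containing `x₀` by `n` labels, is determined by the map sending each `x ≠ x₀`
to the label of its block (or to `none` when `x` lies in the block of `x₀`). There are at least
`(k - 1)!` such labellings, so `∑_P (|P| - 1)! ≤ (n + 1) ^ n` when `|X| = n + 1`, and
`(n + 1) ^ n ≤ n! e ^ (n + 1)` by the exponential series.
-/

open Finset Nat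

theorem Fintype.factorial_card_le_card_embedding {α β : Type*} [Fintype α] [Fintype β]
    (h : Fintype.card α ≤ Fintype.card β) : (Fintype.card α)! ≤ Fintype.card (α ↪ β) := by
  rw [Fintype.card_embedding_eq, ← Nat.descFactorial_self]
  exact Nat.descFactorial_le _ h

theorem Real.pow_le_factorial_mul_exp {x : ℝ} (hx : 0 ≤ x) (n : ℕ) : x ^ n ≤ n ! * Real.exp x := by
  rw [mul_comm, ← div_le_iff₀ (by positivity)]
  exact Real.pow_div_factorial_le_exp x hx n

namespace Finpartition

theorem ext_part {α : Type*} [DecidableEq α] {s : Finset α} {P Q : Finpartition s}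
    (h : ∀ x ∈ s, P.part x = Q.part x) : P = Q := by
  have mem_parts : ∀ R : Finpartition s, ∀ t, t ∈ R.parts ↔ ∃ x ∈ s, R.part x = t :=
    fun R t ↦ ⟨fun ht ↦ R.part_surjOn ht, by rintro ⟨x, hx, rfl⟩; exact R.part_mem.2 hx⟩
  ext t
  simp only [mem_parts]
  exact exists_congr fun x ↦ and_congr_right fun hx ↦ by rw [h x hx]

variable {X α : Type*} [Fintype X] [DecidableEq X]

def blockLabel (P : Finpartition (univ : Finset X)) (x₀ : X)
    (ι : P.parts.erase (P.part x₀) ↪ α) (x : X) : Option α :=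
  if h : P.part x ∈ P.parts.erase (P.part x₀) then some (ι ⟨_, h⟩) else none

section blockLabel

variable {P : Finpartition (univ : Finset X)} {x₀ : X} {ι : P.parts.erase (P.part x₀) ↪ α}

theorem blockLabel_base : blockLabel P x₀ ι x₀ = none := by
  simp [blockLabel]

theorem blockLabel_eq_iff {x y : X} :
    blockLabel P x₀ ι x = blockLabel P x₀ ι y ↔ P.part x = P.part y := by
  have mem_erase_iff : ∀ z, P.part z ∈ P.parts.erase (P.part x₀) ↔ P.part z ≠ P.part x₀ :=
    fun z ↦ by simp [P.part_mem]
  unfold blockLabel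
  split_ifs with hx hy hy
  · simp [ι.injective.eq_iff]
  · simp only [false_iff]
    rw [mem_erase_iff] at hx hy
    exact fun hxy ↦ hx (hxy.trans (not_ne_iff.1 hy))
  · simp only [false_iff]
    rw [mem_erase_iff] at hx hy
    exact fun hxy ↦ hy (hxy.symm.trans (not_ne_iff.1 hx))
  · rw [mem_erase_iff, not_ne_iff] at hx hy
    simp [hx, hy]

end blockLabel

theorem blockLabel_injective (x₀ : X) :
    Function.Injective fun p : Σ P : Finpartition (univ : Finset X),
      P.parts.erase (P.part x₀) ↪ α ↦ blockLabel p.1 x₀ p.2 := by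
  rintro ⟨P, ι⟩ ⟨Q, κ⟩ h
  have h' : ∀ x, blockLabel P x₀ ι x = blockLabel Q x₀ κ x := congrFun h
  obtain rfl : P = Q := ext_part fun x _ ↦ by
    ext y
    rw [P.mem_part_iff_part_eq_part (mem_univ y) (mem_univ x),
      Q.mem_part_iff_part_eq_part (mem_univ y) (mem_univ x),
      ← blockLabel_eq_iff (ι := ι), ← blockLabel_eq_iff (ι := κ), h', h']
  obtain rfl : ι = κ := by
    ext ⟨t, ht⟩
    obtain ⟨x, hx⟩ := P.nonempty_of_mem_parts (mem_of_mem_erase ht)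
    have hxt : P.part x = t := P.part_eq_of_mem (mem_of_mem_erase ht) hx
    have := h' x
    simp only [blockLabel, hxt, dif_pos ht, Option.some_inj] at this
    rw [this]
  rfl

theorem card_sigma_embedding_le (x₀ : X) [Fintype α] :
    Fintype.card (Σ P : Finpartition (univ : Finset X), P.parts.erase (P.part x₀) ↪ α)
      ≤ (Fintype.card α + 1) ^ (Fintype.card X - 1) := by
  have hcard : Fintype.card ({x // x ≠ x₀} → Option α)
      = (Fintype.card α + 1) ^ (Fintype.card X - 1) := by
    simp [Fintype.card_subtype_compl]
  rw [← hcard]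
  refine Fintype.card_le_of_injective (fun p x ↦ blockLabel p.1 x₀ p.2 x) fun p q h ↦
    blockLabel_injective x₀ (funext fun x ↦ ?_)
  by_cases hx : x = x₀
  · subst hx
    simp only [blockLabel_base]
  · exact congrFun h ⟨x, hx⟩

theorem sum_factorial_card_parts_sub_one_le [Nonempty X] :
    ∑ P : Finpartition (univ : Finset X), (#P.parts - 1)!
      ≤ Fintype.card X ^ (Fintype.card X - 1) := by
  obtain ⟨x₀⟩ := ‹Nonempty X›
  have hX : 0 < Fintype.card X := Fintype.card_pos
  calc ∑ P : Finpartition (univ : Finset X), (#P.parts - 1)!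
      ≤ ∑ P : Finpartition (univ : Finset X),
          Fintype.card (P.parts.erase (P.part x₀) ↪ Fin (Fintype.card X - 1)) := by
        refine sum_le_sum fun P _ ↦ ?_
        have hcard : Fintype.card (P.parts.erase (P.part x₀)) = #P.parts - 1 := by
          rw [Fintype.card_coe, card_erase_of_mem (P.part_mem.2 (mem_univ x₀))]
        rw [← hcard]
        apply Fintype.factorial_card_le_card_embedding
        rw [hcard, Fintype.card_fin]
        have := P.card_parts_le_card
        rw [Finset.card_univ] at this
        omega
    _ = Fintype.card (Σ P : Finpartition (univ : Finset X),
          P.parts.erase (P.part x₀) ↪ Fin (Fintype.card X - 1)) :=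
        Fintype.card_sigma.symm
    _ ≤ Fintype.card X ^ (Fintype.card X - 1) := by
        convert card_sigma_embedding_le x₀ using 2
        simp only [Fintype.card_fin]
        omega

end Finpartition

/-- For every natural number `n`, the sum over all partitions `P` of a set with `n+1` elements
of `(|P|-1)!` is at most `n! * e^(n+2)`, where `|P|` is the number of blocks of `P`. -/
theorem partition_factorial_sum_le
    (n : ℕ) (X : Type*) [Fintype X] [DecidableEq X] (hX : Fintype.card X = n + 1) :
    ∑ P : Finpartition (Finset.univ : Finset X),
        (Nat.factorial (P.parts.card - 1) : ℝ)
      ≤ (Nat.factorial n : ℝ) * Real.exp 1 ^ (n + 2) := by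
  have : Nonempty X := Fintype.card_pos_iff.1 (by omega)
  have hsum := Finpartition.sum_factorial_card_parts_sub_one_le (X := X)
  rw [hX, Nat.add_sub_cancel] at hsum
  calc ∑ P : Finpartition (Finset.univ : Finset X), ((P.parts.card - 1)! : ℝ)
      ≤ ((n + 1 : ℕ) : ℝ) ^ n := by exact_mod_cast hsum
    _ ≤ n ! * Real.exp (n + 1) := by
        exact_mod_cast Real.pow_le_factorial_mul_exp (x := n + 1) (by positivity) n
    _ = n ! * Real.exp 1 ^ (n + 1) := by rw [← Real.exp_nat_mul]; push_cast; ring_nf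
    _ ≤ n ! * Real.exp 1 ^ (n + 2) := by
        gcongr
        · exact Real.one_le_exp zero_le_one
        · omega
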